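/- Let X be a subshift over a finite alphabet Λ. Then the following are equivalent: (i) for every β ∈ L_X and every ξ ∈ Ω_X, the orbit of ξ meets Ω_β, i.e. Orb(ξ) ∩ {η ∈ Ω_X : β ∈ η} ≠ ∅; (ii) X is strongly cofinal. -/

import Mathlib

open scoped Classical

namespace SubshiftPaper

variable {Λ : Type}

/-- The left shift on infinite words. -/
def shiftMap (x : ℕ → Λ) : ℕ → Λ := fun n => x (n + 1)

/-- Concatenation of a finite word with an infinite word. -/
def cat (α : List Λ) (y : ℕ → Λ) : ℕ → Λ := fun n => α.getD n (y (n - α.length))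

/-- `α` is a prefix of the infinite word `x`. -/
def Pref (α : List Λ) (x : ℕ → Λ) : Prop := ∀ (i : ℕ) (h : i < α.length), x i = α[i]

/-- The tail of `x` after `n` letters. -/
def tail (x : ℕ → Λ) (n : ℕ) : ℕ → Λ := fun i => x (n + i)

/-- `α` occurs in `x` at position `n`. -/
def OccursAt (α : List Λ) (x : ℕ → Λ) (n : ℕ) : Prop :=
  ∀ (i : ℕ) (h : i < α.length), x (n + i) = α[i]

/-- `α` occurs in `x` (as a contiguous block of letters). -/
def Occurs (α : List Λ) (x : ℕ → Λ) : Prop := ∃ n, OccursAt α x n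

/-- `X` is a subshift: a nonempty closed shift-invariant subset. -/
def IsSubshift [TopologicalSpace Λ] (X : Set (ℕ → Λ)) : Prop :=
  X.Nonempty ∧ IsClosed X ∧ ∀ x ∈ X, shiftMap x ∈ X

/-- The set of infinite words avoiding all words in `F`. -/
def ForbidSpace (F : Set (List Λ)) : Set (ℕ → Λ) := {x | ∀ α ∈ F, ¬ Occurs α x}

/-- `X` is a subshift of finite type. -/
def IsSFT (X : Set (ℕ → Λ)) : Prop := ∃ F : Set (List Λ), F.Finite ∧ X = ForbidSpace F

/-- The follower set of a finite word. -/
def follower (X : Set (ℕ → Λ)) (α : List Λ) : Set (ℕ → Λ) := {y | y ∈ X ∧ cat α y ∈ X}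

/-- The cylinder of a finite word. -/
def cylinder (X : Set (ℕ → Λ)) (α : List Λ) : Set (ℕ → Λ) := {x | x ∈ X ∧ Pref α x}

/-- The language of `X`. -/
def Language (X : Set (ℕ → Λ)) : Set (List Λ) := {α | ∃ x ∈ X, Occurs α x}

/-- The embedding of finite words into the free group. -/
def wd (α : List Λ) : FreeGroup Λ := (α.map FreeGroup.of).prod

/-- Indicator function of a set of group elements. -/
noncomputable def chi (s : Set (FreeGroup Λ)) : FreeGroup Λ → Bool :=
  fun g => if g ∈ s then true else false

/-- The set `ξ_x ⊆ 𝔽`. -/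
def xiSet [DecidableEq Λ] (X : Set (ℕ → Λ)) (x : ℕ → Λ) : Set (FreeGroup Λ) :=
  {g | ∃ α β : List Λ, g = wd α * (wd β)⁻¹ ∧
        FreeGroup.norm g = α.length + β.length ∧
        Pref α x ∧ tail x α.length ∈ follower X α ∩ follower X β}

/-- `ξ_x` as an element of `2^𝔽`. -/
noncomputable def xiB [DecidableEq Λ] (X : Set (ℕ → Λ)) (x : ℕ → Λ) : FreeGroup Λ → Bool :=
  chi (xiSet X x)

/-- The spectrum `Ω_X`: the closure of `{ξ_x : x ∈ X}` in `2^𝔽`. -/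
noncomputable def Omega [DecidableEq Λ] (X : Set (ℕ → Λ)) : Set (FreeGroup Λ → Bool) :=
  closure ((fun x => xiB X x) '' X)

/-- Left translation of an element of `2^𝔽`. -/
def translate (g : FreeGroup Λ) (ξ : FreeGroup Λ → Bool) : FreeGroup Λ → Bool :=
  fun h => ξ (g⁻¹ * h)

/-- `x` is the stem of `ξ`: `ξ ∩ 𝔽₊` is exactly the set of prefixes of `x`. -/
def IsStem (ξ : FreeGroup Λ → Bool) (x : ℕ → Λ) : Prop :=
  {g | ξ g = true} ∩ {g | ∃ α : List Λ, g = wd α} =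
    {g | ∃ α : List Λ, g = wd α ∧ Pref α x}

/-- `x` is the stem of `ξ` at `g`: `ξ ∩ g𝔽₊ = {gα : α is a prefix of x}`. -/
def IsStemAt (ξ : FreeGroup Λ → Bool) (g : FreeGroup Λ) (x : ℕ → Λ) : Prop :=
  {h | ξ h = true} ∩ {h | ∃ α : List Λ, h = g * wd α} =
    {h | ∃ α : List Λ, h = g * wd α ∧ Pref α x}

/-- The orbit of `ξ` under the spectral partial action. -/
def Orbit (ξ : FreeGroup Λ → Bool) : Set (FreeGroup Λ → Bool) :=
  {η | ∃ g : FreeGroup Λ, ξ g⁻¹ = true ∧ η = translate g ξ}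

/-- Topological freeness of the spectral partial action. -/
noncomputable def TopFree [DecidableEq Λ] (X : Set (ℕ → Λ)) : Prop :=
  ∀ g : FreeGroup Λ, g ≠ 1 →
    ∀ U : Set (FreeGroup Λ → Bool), IsOpen U →
      (U ∩ Omega X ⊆ {ξ | ξ g⁻¹ = true ∧ translate g ξ = ξ}) → U ∩ Omega X = ∅

/-- The periodic infinite word `γ^∞`. -/
noncomputable def perInf [Nonempty Λ] (γ : List Λ) : ℕ → Λ :=
  fun n => γ.getD (n % γ.length) (Classical.arbitrary Λ)

/-- `n`-fold concatenation of a finite word with itself. -/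
def rep : ℕ → List Λ → List Λ
  | 0, _ => []
  | n + 1, γ => γ ++ rep n γ

/-- `γ` is a circuit relative to `X`. -/
noncomputable def IsCircuit [Nonempty Λ] (X : Set (ℕ → Λ)) (γ : List Λ) : Prop :=
  γ ≠ [] ∧ perInf γ ∈ X

/-- `y` is an exit for the circuit `γ`. -/
noncomputable def IsExit [Nonempty Λ] (X : Set (ℕ → Λ)) (γ : List Λ) (y : ℕ → Λ) : Prop :=
  y ≠ perInf γ ∧ cat γ y ∈ X

/-- `z` is a strong exit for the circuit `γ`. -/
noncomputable def IsStrongExit [Nonempty Λ] (X : Set (ℕ → Λ)) (γ : List Λ) (z : ℕ → Λ) : Prop :=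
  z ≠ perInf γ ∧ ∀ n : ℕ, cat (rep n γ) z ∈ X

/-- The sets `X_g` of the standard partial action. -/
def Xg [DecidableEq Λ] (X : Set (ℕ → Λ)) (g : FreeGroup Λ) : Set (ℕ → Λ) :=
  {x | ∃ α β : List Λ, g = wd α * (wd β)⁻¹ ∧
        FreeGroup.norm g = α.length + β.length ∧
        ∃ y ∈ follower X α ∩ follower X β, x = cat α y}

/-- `x` is a fixed point for `θ_g`. -/
def IsThetaFixed [DecidableEq Λ] (X : Set (ℕ → Λ)) (g : FreeGroup Λ) (x : ℕ → Λ) : Prop :=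
  ∃ α β : List Λ, g = wd α * (wd β)⁻¹ ∧
    FreeGroup.norm g = α.length + β.length ∧
    ∃ y ∈ follower X α ∩ follower X β, x = cat β y ∧ cat α y = x

/-- `x` may be collectively reached from the finite set `B`. -/
def CollReached (X : Set (ℕ → Λ)) (B : Finset (List Λ)) (x : ℕ → Λ) : Prop :=
  ∃ α γ : List Λ, Pref α x ∧ ∀ β ∈ B, cat (β ++ γ) (tail x α.length) ∈ X

/-- `X` is collectively cofinal. -/
def CollCofinal (X : Set (ℕ → Λ)) : Prop :=
  ∀ B : Finset (List Λ), ↑B ⊆ Language X → (⋂ β ∈ B, follower X β).Nonempty →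
    ∀ x ∈ X, CollReached X B x

/-- `X` is strongly cofinal. -/
def StrongCofinal (X : Set (ℕ → Λ)) : Prop :=
  ∀ β ∈ Language X, ∃ M : ℕ, ∀ x ∈ X, ∃ α γ : List Λ, Pref α x ∧
    cat (β ++ γ) (tail x α.length) ∈ X ∧ α.length + γ.length ≤ M

/-- The even shift. -/
def evenShift : Set (ℕ → Fin 2) :=
  ForbidSpace {w | ∃ n : ℕ, w = 0 :: (List.replicate (2 * n + 1) 1 ++ [0])}


/-!
Translating `ξ_{αy}` by `δα⁻¹` gives `ξ_{δy}` whenever `αy, δy ∈ X`, and the positive words in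
`ξ_x` are exactly the prefixes of `x`. So if `g⁻¹ ∈ ξ_x` and `β` lies in the translate `gξ_x`,
then `x` can be reached from `β` at cost at most `|g| + |β|`; conversely a witness `(α, γ)` of
reachability gives the translation `g = βγα⁻¹` taking `ξ_x` into `Ω_β`.

If every orbit meets `Ω_β`, the open sets `{η | g⁻¹ ∈ η, g⁻¹β ∈ η}` cover the compact space `Ω_X`,
and a finite subcover bounds the cost uniformly. If the cost is bounded by `M`, only finitely many
witnesses `(α, γ)` are needed, so `Ω_X` is the finite union of the closures of the sets of `ξ_x`
sharing a witness; on each of them a single translation works, and it still works on the closure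
because `Ω_β` is closed and translation is continuous.
-/

section Words

lemma tail_zero (x : ℕ → Λ) : tail x 0 = x := funext fun i => by simp [tail]

lemma tail_tail (x : ℕ → Λ) (n m : ℕ) : tail (tail x n) m = tail x (n + m) :=
  funext fun i => by simp only [tail, Nat.add_assoc]

lemma cat_of_lt {α : List Λ} {y : ℕ → Λ} {n : ℕ} (h : n < α.length) : cat α y n = α[n] :=
  List.getD_eq_getElem _ _ h

lemma cat_of_le {α : List Λ} {y : ℕ → Λ} {n : ℕ} (h : α.length ≤ n) :
    cat α y n = y (n - α.length) :=
  List.getD_eq_default _ _ h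

lemma cat_nil (y : ℕ → Λ) : cat [] y = y := funext fun n => by simp [cat]

lemma cat_append (α ρ : List Λ) (y : ℕ → Λ) : cat (α ++ ρ) y = cat α (cat ρ y) := by
  funext n
  rcases lt_or_ge n α.length with h1 | h1
  · rw [cat_of_lt (by rw [List.length_append]; omega), cat_of_lt h1, List.getElem_append_left h1]
  · rcases lt_or_ge n (α.length + ρ.length) with h2 | h2
    · rw [cat_of_lt (by simpa using h2), cat_of_le h1, cat_of_lt (by omega),
        List.getElem_append_right h1]
    · rw [cat_of_le (by simpa using h2), cat_of_le h1, cat_of_le (by omega),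
        List.length_append, Nat.sub_add_eq]

lemma pref_nil (x : ℕ → Λ) : Pref [] x := fun _ h => absurd h (Nat.not_lt_zero _)

lemma pref_cat (α : List Λ) (y : ℕ → Λ) : Pref α (cat α y) := fun _ h => cat_of_lt h

lemma tail_cat (α : List Λ) (y : ℕ → Λ) : tail (cat α y) α.length = y :=
  funext fun i => by rw [tail, cat_of_le (Nat.le_add_right _ _), Nat.add_sub_cancel_left]

lemma tail_cat_add (α : List Λ) (y : ℕ → Λ) (n : ℕ) : tail (cat α y) (α.length + n) = tail y n := by
  rw [← tail_tail, tail_cat]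

lemma cat_tail_of_pref {α : List Λ} {x : ℕ → Λ} (h : Pref α x) : cat α (tail x α.length) = x := by
  funext n
  rcases lt_or_ge n α.length with hn | hn
  · rw [cat_of_lt hn, h n hn]
  · rw [cat_of_le hn, tail, Nat.add_sub_cancel' hn]

lemma pref_append {α ρ : List Λ} {x : ℕ → Λ} :
    Pref (α ++ ρ) x ↔ Pref α x ∧ Pref ρ (tail x α.length) := by
  constructor
  · intro h
    refine ⟨fun i hi => ?_, fun i hi => ?_⟩
    · rw [h i (by rw [List.length_append]; omega), List.getElem_append_left hi]
    · rw [tail, h (α.length + i) (by rw [List.length_append]; omega),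
        List.getElem_append_right (Nat.le_add_right _ _)]
      simp
  · rintro ⟨h1, h2⟩ i hi
    rcases lt_or_ge i α.length with h3 | h3
    · rw [List.getElem_append_left h3, h1 i h3]
    · rw [List.length_append] at hi
      rw [List.getElem_append_right h3, ← h2 (i - α.length) (by omega), tail,
        Nat.add_sub_cancel' h3]

lemma Pref.exists_append_of_length_le {α μ : List Λ} {x : ℕ → Λ} (hα : Pref α x)
    (hμ : Pref μ x) (h : α.length ≤ μ.length) : ∃ ρ, μ = α ++ ρ := by
  refine ⟨μ.drop α.length, ?_⟩
  conv_lhs => rw [← List.take_append_drop α.length μ]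
  congr 1
  apply List.ext_getElem (by simp [h])
  intro i h1 h2
  rw [List.getElem_take, ← hμ i (by omega), ← hα i h2]

lemma Pref.cat_cases {β δ : List Λ} {y : ℕ → Λ} (h : Pref β (cat δ y)) :
    (∃ γ, δ = β ++ γ) ∨ ∃ ρ, β = δ ++ ρ ∧ Pref ρ y := by
  rcases le_total β.length δ.length with hle | hle
  · exact .inl (h.exists_append_of_length_le (pref_cat δ y) hle)
  · obtain ⟨ρ, rfl⟩ := (pref_cat δ y).exists_append_of_length_le h hle
    exact .inr ⟨ρ, rfl, by simpa only [tail_cat] using (pref_append.mp h).2⟩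

lemma exists_common_prefix :
    ∀ α β : List Λ, ∃ s α₀ β₀ : List Λ, α = s ++ α₀ ∧ β = s ++ β₀ ∧
      ∀ a ∈ α₀.head?, ∀ b ∈ β₀.head?, a ≠ b
  | [], β => ⟨[], [], β, rfl, rfl, by simp⟩
  | a :: α, [] => ⟨[], a :: α, [], rfl, rfl, by simp⟩
  | a :: α, b :: β => by
    by_cases hab : a = b
    · obtain ⟨s, α₀, β₀, rfl, rfl, h⟩ := exists_common_prefix α β
      exact ⟨a :: s, α₀, β₀, rfl, by rw [hab]; rfl, h⟩
    · exact ⟨[], a :: α, b :: β, rfl, rfl, by simpa using hab⟩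

lemma exists_common_suffix (α β : List Λ) : ∃ α₀ β₀ s : List Λ, α = α₀ ++ s ∧ β = β₀ ++ s ∧
    ∀ a ∈ α₀.getLast?, ∀ b ∈ β₀.getLast?, a ≠ b := by
  obtain ⟨s, α₀, β₀, hα, hβ, h⟩ := exists_common_prefix α.reverse β.reverse
  refine ⟨α₀.reverse, β₀.reverse, s.reverse, ?_, ?_, by simpa only [List.getLast?_reverse]⟩
  · rw [← List.reverse_reverse α, hα, List.reverse_append]
  · rw [← List.reverse_reverse β, hβ, List.reverse_append]

end Words

section FreeGroup

lemma wd_append (α β : List Λ) : wd (α ++ β) = wd α * wd β := by simp [wd]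

lemma wd_eq_mk (α : List Λ) : wd α = FreeGroup.mk (α.map (·, true)) := by
  induction α with
  | nil => rfl
  | cons a α ih =>
    simp only [wd, List.map_cons, List.prod_cons] at ih ⊢
    rw [ih, FreeGroup.of, FreeGroup.mul_mk]
    rfl

lemma isReduced_map_pair (l : List Λ) (b : Bool) : FreeGroup.IsReduced (l.map (·, b)) := by
  simpa [FreeGroup.IsReduced, List.isChain_map] using
    List.Pairwise.isChain (List.pairwise_of_forall (l := l) fun _ _ => trivial)

variable [DecidableEq Λ]

lemma toWord_wd_mul_inv {α β : List Λ} (h : ∀ a ∈ α.getLast?, ∀ b ∈ β.getLast?, a ≠ b) :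
    (wd α * (wd β)⁻¹).toWord = α.map (·, true) ++ β.reverse.map (·, false) := by
  rw [wd_eq_mk, wd_eq_mk, FreeGroup.inv_mk, FreeGroup.mul_mk, FreeGroup.toWord_mk]
  have hinv : FreeGroup.invRev (β.map (·, true)) = β.reverse.map (·, false) := by
    simp [FreeGroup.invRev, List.map_reverse]
  rw [hinv]
  apply FreeGroup.IsReduced.reduce_eq
  rw [FreeGroup.IsReduced, List.isChain_append]
  exact ⟨isReduced_map_pair α true, isReduced_map_pair _ false, by simpa using h⟩

lemma toWord_wd (α : List Λ) : (wd α).toWord = α.map (·, true) := by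
  simpa [wd] using toWord_wd_mul_inv (α := α) (β := []) (by simp)

lemma wd_injective : Function.Injective (wd : List Λ → FreeGroup Λ) := fun α β h =>
  List.map_injective_iff.mpr (fun _ _ hab => (Prod.mk.inj hab).1) <| by
    rw [← toWord_wd, ← toWord_wd, h]

lemma norm_wd_mul_inv {α β : List Λ} (h : ∀ a ∈ α.getLast?, ∀ b ∈ β.getLast?, a ≠ b) :
    (wd α * (wd β)⁻¹).norm = α.length + β.length := by
  simp [FreeGroup.norm, toWord_wd_mul_inv h]

end FreeGroup

lemma IsSubshift.tail_mem [TopologicalSpace Λ] {X : Set (ℕ → Λ)} (hX : IsSubshift X)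
    {x : ℕ → Λ} (hx : x ∈ X) (n : ℕ) : tail x n ∈ X := by
  induction n with
  | zero => rwa [tail_zero]
  | succ n ih =>
    have : tail x (n + 1) = shiftMap (tail x n) := funext fun i => by
      simp only [tail, shiftMap]; ring_nf
    exact this ▸ hX.2.2 _ ih

lemma isClopen_setOf_apply_eq_true {ι : Type*} (i : ι) : IsClopen {η : ι → Bool | η i = true} :=
  (isClopen_discrete {true}).preimage (continuous_apply i)

lemma continuous_translate (g : FreeGroup Λ) :
    Continuous (translate g : (FreeGroup Λ → Bool) → FreeGroup Λ → Bool) :=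
  continuous_pi fun h => continuous_apply (g⁻¹ * h)

section Spectrum

variable [DecidableEq Λ] {X : Set (ℕ → Λ)}

lemma xiB_eq_true {x : ℕ → Λ} {g : FreeGroup Λ} : xiB X x g = true ↔ g ∈ xiSet X x := by
  simp [xiB, chi]

variable [TopologicalSpace Λ]

/-- Membership in `ξ_x` does not need the product `αβ⁻¹` to be reduced. -/
lemma mem_xiSet_iff (hX : IsSubshift X) {x : ℕ → Λ} (hx : x ∈ X) {g : FreeGroup Λ} :
    g ∈ xiSet X x ↔
      ∃ α β : List Λ, g = wd α * (wd β)⁻¹ ∧ Pref α x ∧ cat β (tail x α.length) ∈ X := by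
  constructor
  · rintro ⟨α, β, hg, -, hα, -, -, hβ⟩
    exact ⟨α, β, hg, hα, hβ⟩
  · rintro ⟨α, β, hg, hα, hβ⟩
    obtain ⟨α₀, β₀, s, rfl, rfl, hlast⟩ := exists_common_suffix α β
    have hg₀ : g = wd α₀ * (wd β₀)⁻¹ := by rw [hg, wd_append, wd_append]; group
    obtain ⟨hα₀, hs⟩ := pref_append.mp hα
    refine ⟨α₀, β₀, hg₀, hg₀ ▸ norm_wd_mul_inv hlast, hα₀,
      ⟨hX.tail_mem hx _, (cat_tail_of_pref hα₀).symm ▸ hx⟩, hX.tail_mem hx _, ?_⟩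
    rwa [← cat_tail_of_pref hs, tail_tail, ← cat_append, ← List.length_append]

lemma one_mem_xiSet (hX : IsSubshift X) {x : ℕ → Λ} (hx : x ∈ X) : 1 ∈ xiSet X x :=
  (mem_xiSet_iff hX hx).mpr ⟨[], [], by simp [wd], pref_nil x, by simpa [cat_nil, tail_zero]⟩

lemma wd_mem_xiSet_iff (hX : IsSubshift X) {x : ℕ → Λ} (hx : x ∈ X) {β : List Λ} :
    wd β ∈ xiSet X x ↔ Pref β x := by
  constructor
  · rintro ⟨α, δ, hβ, -, hα, -⟩
    have : β ++ δ = α := wd_injective (by rw [wd_append, hβ, inv_mul_cancel_right])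
    exact (pref_append.mp (this ▸ hα)).1
  · intro hβ
    exact (mem_xiSet_iff hX hx).mpr
      ⟨β, [], by simp [wd], hβ, by simpa only [cat_nil] using hX.tail_mem hx _⟩

lemma wd_mul_inv_mul_mem_xiSet (hX : IsSubshift X) {α δ : List Λ} {y : ℕ → Λ}
    (hα : cat α y ∈ X) (hδ : cat δ y ∈ X) {h : FreeGroup Λ} (hh : h ∈ xiSet X (cat δ y)) :
    wd α * (wd δ)⁻¹ * h ∈ xiSet X (cat α y) := by
  obtain ⟨μ, ν, rfl, hμ, hν⟩ := (mem_xiSet_iff hX hδ).mp hh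
  rw [mem_xiSet_iff hX hα]
  rcases hμ.cat_cases with ⟨τ, rfl⟩ | ⟨ρ, rfl, hρ⟩
  · refine ⟨α, ν ++ τ, by rw [wd_append, wd_append]; group, pref_cat α y, ?_⟩
    rwa [tail_cat, cat_append, ← tail_cat μ (cat τ y), ← cat_append]
  · refine ⟨α ++ ρ, ν, by rw [wd_append, wd_append]; group,
      pref_append.mpr ⟨pref_cat α y, (tail_cat α y).symm ▸ hρ⟩, ?_⟩
    rwa [List.length_append, tail_cat_add, ← tail_cat_add δ y, ← List.length_append]

lemma translate_xiB (hX : IsSubshift X) {α δ : List Λ} {y : ℕ → Λ}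
    (hα : cat α y ∈ X) (hδ : cat δ y ∈ X) :
    translate (wd δ * (wd α)⁻¹) (xiB X (cat α y)) = xiB X (cat δ y) := by
  funext h
  rw [Bool.eq_iff_iff, translate, xiB_eq_true, xiB_eq_true]
  constructor
  · intro hm
    simpa [mul_assoc] using wd_mul_inv_mul_mem_xiSet hX hδ hα hm
  · intro hm
    simpa [mul_assoc] using wd_mul_inv_mul_mem_xiSet hX hα hδ hm

lemma exists_reach_of_mem_xiSet (hX : IsSubshift X) {x : ℕ → Λ} (hx : x ∈ X) {β : List Λ}
    {g : FreeGroup Λ} (hg : g⁻¹ ∈ xiSet X x) (hgβ : g⁻¹ * wd β ∈ xiSet X x) :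
    ∃ α γ : List Λ, Pref α x ∧ cat (β ++ γ) (tail x α.length) ∈ X ∧
      α.length + γ.length ≤ g.norm + β.length := by
  obtain ⟨α, δ, hg_eq, hnorm, hα, -, -, hδ⟩ := hg
  set y := tail x α.length
  have hxy : cat α y = x := cat_tail_of_pref hα
  have hg' : g = wd δ * (wd α)⁻¹ := by rw [← inv_inv g, hg_eq]; group
  have hβ : Pref β (cat δ y) := by
    rw [← wd_mem_xiSet_iff hX hδ, ← xiB_eq_true, ← translate_xiB hX (hxy ▸ hx) hδ, ← hg', hxy]
    exact xiB_eq_true.mpr hgβ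
  rw [FreeGroup.norm_inv_eq] at hnorm
  rcases hβ.cat_cases with ⟨γ, rfl⟩ | ⟨ρ, rfl, hρ⟩
  · exact ⟨α, γ, hα, hδ, by rw [List.length_append] at hnorm; omega⟩
  · refine ⟨α ++ ρ, [], pref_append.mpr ⟨hα, hρ⟩, ?_,
      by simp only [List.length_append, List.length_nil]; omega⟩
    rwa [List.append_nil, cat_append, List.length_append, ← tail_tail, cat_tail_of_pref hρ]

lemma translate_xiB_mem_image_cylinder (hX : IsSubshift X) {x : ℕ → Λ} (hx : x ∈ X)
    {α β γ : List Λ} (hα : Pref α x) (hγ : cat (β ++ γ) (tail x α.length) ∈ X) :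
    translate (wd (β ++ γ) * (wd α)⁻¹) (xiB X x) ∈ xiB X '' cylinder X β := by
  have hxy := cat_tail_of_pref hα
  refine ⟨_, ⟨hγ, (pref_append.mp (pref_cat _ _)).1⟩, ?_⟩
  rw [← translate_xiB hX (hxy.symm ▸ hx) hγ, hxy]

lemma closure_image_cylinder_subset (hX : IsSubshift X) (β : List Λ) :
    closure (xiB X '' cylinder X β) ⊆
      Omega X ∩ {η | η 1 = true} ∩ {η | η (wd β) = true} := by
  refine closure_minimal ?_ (isClosed_closure.inter (isClopen_setOf_apply_eq_true _).isClosed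
    |>.inter (isClopen_setOf_apply_eq_true _).isClosed)
  rintro _ ⟨x, ⟨hx, hβ⟩, rfl⟩
  exact ⟨⟨subset_closure ⟨x, hx, rfl⟩, xiB_eq_true.mpr (one_mem_xiSet hX hx)⟩,
    xiB_eq_true.mpr ((wd_mem_xiSet_iff hX hx).mpr hβ)⟩

lemma strongCofinal_of_orbit_meets (hX : IsSubshift X)
    (H : ∀ β ∈ Language X, ∀ ξ ∈ Omega X, ∃ g : FreeGroup Λ,
      ξ g⁻¹ = true ∧ translate g ξ (wd β) = true) :
    StrongCofinal X := by
  intro β hβ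
  let U (g : FreeGroup Λ) : Set (FreeGroup Λ → Bool) := {η | η g⁻¹ = true ∧ η (g⁻¹ * wd β) = true}
  have hU (g : FreeGroup Λ) : IsOpen (U g) :=
    (isClopen_setOf_apply_eq_true _).isOpen.inter (isClopen_setOf_apply_eq_true _).isOpen
  obtain ⟨t, ht⟩ := isClosed_closure.isCompact.elim_finite_subcover U hU fun ξ hξ =>
    Set.mem_iUnion.mpr (H β hβ ξ hξ)
  refine ⟨t.sup FreeGroup.norm + β.length, fun x hx => ?_⟩
  obtain ⟨g, hgt, hg, hgβ⟩ := Set.mem_iUnion₂.mp (ht (subset_closure ⟨x, hx, rfl⟩))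
  obtain ⟨α, γ, hα, hγ, hcost⟩ :=
    exists_reach_of_mem_xiSet hX hx (xiB_eq_true.mp hg) (xiB_eq_true.mp hgβ)
  exact ⟨α, γ, hα, hγ, hcost.trans (by gcongr; exact Finset.le_sup hgt)⟩

lemma orbit_meets_of_strongCofinal [Finite Λ] (hX : IsSubshift X) (hSC : StrongCofinal X)
    {β : List Λ} (hβ : β ∈ Language X) {ξ : FreeGroup Λ → Bool} (hξ : ξ ∈ Omega X) :
    ∃ g : FreeGroup Λ, ξ g⁻¹ = true ∧ translate g ξ ∈ Omega X ∧ translate g ξ (wd β) = true := by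
  obtain ⟨M, hM⟩ := hSC β hβ
  let R (p : List Λ × List Λ) : Set (ℕ → Λ) :=
    {x | x ∈ X ∧ Pref p.1 x ∧ cat (β ++ p.2) (tail x p.1.length) ∈ X}
  let P := {l : List Λ | l.length ≤ M} ×ˢ {l : List Λ | l.length ≤ M}
  have hP : P.Finite := (List.finite_length_le Λ M).prod (List.finite_length_le Λ M)
  have hcover : xiB X '' X ⊆ ⋃ p ∈ P, xiB X '' R p := by
    rintro _ ⟨x, hx, rfl⟩
    obtain ⟨α, γ, hα, hγ, hcost⟩ := hM x hx
    exact Set.mem_biUnion (x := (α, γ)) ⟨show α.length ≤ M by omega, show γ.length ≤ M by omega⟩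
      ⟨x, ⟨hx, hα, hγ⟩, rfl⟩
  have hξ' : ξ ∈ ⋃ p ∈ P, closure (xiB X '' R p) := by
    rw [← hP.closure_biUnion]
    exact closure_mono hcover hξ
  obtain ⟨⟨α, γ⟩, -, hξR⟩ := Set.mem_iUnion₂.mp hξ'
  have hmaps : Set.MapsTo (translate (wd (β ++ γ) * (wd α)⁻¹)) (xiB X '' R (α, γ))
      (xiB X '' cylinder X β) := by
    rintro _ ⟨x, ⟨hx, hα, hγ⟩, rfl⟩
    exact translate_xiB_mem_image_cylinder hX hx hα hγ
  have hη := map_mem_closure (continuous_translate _) hξR hmaps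
  obtain ⟨⟨hΩ, h1⟩, hβ'⟩ := closure_image_cylinder_subset hX β hη
  exact ⟨_, by simpa [translate] using h1, hΩ, hβ'⟩

end Spectrum

theorem orbit_meets_iff_strongCofinal_general {Λ : Type} [Fintype Λ] [DecidableEq Λ]
    [TopologicalSpace Λ]
    (X : Set (ℕ → Λ)) (hX : IsSubshift X) :
    (∀ β ∈ Language X, ∀ ξ ∈ Omega X, ∃ g : FreeGroup Λ,
        ξ g⁻¹ = true ∧ translate g ξ ∈ Omega X ∧ translate g ξ (wd β) = true) ↔
      StrongCofinal X :=
  ⟨fun H => strongCofinal_of_orbit_meets hX fun β hβ ξ hξ =>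
      let ⟨g, hg, _, hgβ⟩ := H β hβ ξ hξ
      ⟨g, hg, hgβ⟩,
    fun hSC _ hβ _ hξ => orbit_meets_of_strongCofinal hX hSC hβ hξ⟩

/-- every orbit meets every `Ω_β` (for `β` in the language) iff `X` is
strongly cofinal. -/
theorem orbit_meets_iff_strongCofinal {Λ : Type} [Fintype Λ] [Nonempty Λ] [DecidableEq Λ]
    [TopologicalSpace Λ] [DiscreteTopology Λ]
    (X : Set (ℕ → Λ)) (hX : IsSubshift X) :
    (∀ β ∈ Language X, ∀ ξ ∈ Omega X, ∃ g : FreeGroup Λ,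
        ξ g⁻¹ = true ∧ translate g ξ ∈ Omega X ∧ translate g ξ (wd β) = true) ↔
      StrongCofinal X :=
  orbit_meets_iff_strongCofinal_general X hX

end SubshiftPaper
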